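/- The number of ordered trees with n edges (n+1 vertices) in which exactly r_i vertices have i children for each i (necessarily Σ r_i = n+1 and Σ i·r_i = n) equals (1/(n+1)) · multinomial(n+1; r_0, r_1, ..., r_n). -/

import Mathlib

/-- An ordered (plane) rooted tree. -/
inductive OTree where
  | node : List OTree → OTree

/-- Number of edges of an ordered tree. -/
def OTree.edges : OTree → ℕ
  | .node cs => cs.length + (cs.attach.map (fun c => OTree.edges c.1)).sum
  decreasing_by
    have := List.sizeOf_lt_of_mem c.2
    simp at this ⊢; omega

/-- Number of vertices of an ordered tree having exactly `i` children. -/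
def OTree.degCount (i : ℕ) : OTree → ℕ
  | .node cs => (if cs.length = i then 1 else 0) +
      (cs.attach.map (fun c => OTree.degCount i c.1)).sum
  decreasing_by
    have := List.sizeOf_lt_of_mem c.2
    simp at this ⊢; omega

/-!
Count forests instead of trees. Let `N(k, m)` be the number of ordered forests of `k` trees whose
multiset of outdegrees is `m`; such a forest has `card m = m.sum + k` vertices. Deleting the root
of the first tree, of outdegree `j`, makes its `j` subtrees the first trees of a new forest; this
is a bijection, so `N(k + 1, m) = ∑_{j ∈ m} N(k + j, m - {j})`. By strong induction on `m` it
follows that `card m * N(k, m) = k * countPerms m`, where `countPerms m` is the multinomial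
coefficient of the multiplicities in `m`. The theorem is the case `k = 1`.
-/

namespace Multiset

theorem card_mul_countPerms_erase {α : Type*} [DecidableEq α] {m : Multiset α} {a : α}
    (h : a ∈ m) : card m * (m.erase a).countPerms = m.count a * m.countPerms := by
  obtain ⟨m, rfl⟩ := exists_cons_of_mem h
  rw [erase_cons_head, countPerms_filter_ne a (a ::ₘ m), countPerms_filter_ne a m,
    filter_cons_of_neg (p := (a ≠ ·)) _ (not_not.mpr rfl), card_cons, count_cons_self,
    ← mul_assoc, ← mul_assoc, Nat.add_one_mul_choose_eq, mul_comm (count a m + 1)]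

theorem countPerms_singleton {α : Type*} [DecidableEq α] (a : α) : countPerms {a} = 1 := by
  rw [countPerms_filter_ne a]
  simp [filter_singleton]

theorem sum_count_mul_add (k : ℕ) (m : Multiset ℕ) :
    ∑ j ∈ m.toFinset, m.count j * (k + j) = k * card m + m.sum := by
  simp only [mul_add, Finset.sum_add_distrib, ← Finset.sum_mul, toFinset_sum_count_eq,
    Finset.sum_multiset_count m, smul_eq_mul, mul_comm k]

section FinsetSumReplicate

variable {α : Type*} (s : Finset α) (f : α → ℕ)

theorem count_finsetSum_replicate [DecidableEq α] (a : α) :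
    count a (∑ i ∈ s, replicate (f i) i) = if a ∈ s then f a else 0 := by
  simp [count_sum', count_replicate]

theorem sum_finsetSum_replicate [AddCommMonoid α] :
    (∑ i ∈ s, replicate (f i) i).sum = ∑ i ∈ s, f i • i := by
  rw [← coe_sumAddMonoidHom, map_sum]
  simp

theorem countPerms_finsetSum_replicate [DecidableEq α] :
    (∑ i ∈ s, replicate (f i) i).countPerms = Nat.multinomial s f := by
  rw [countPerms, Finsupp.multinomial_eq_of_support_subset (s := s)]
  · exact Nat.multinomial_congr fun a ha => by simp [count_replicate, ha]
  · intro a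
    simp +contextual [count_replicate]

end FinsetSumReplicate

end Multiset

namespace OTree

@[simp] theorem edges_node (cs : List OTree) :
    (node cs).edges = cs.length + (cs.map edges).sum := by
  rw [edges, List.attach_map_val]

@[simp] theorem degCount_node (i : ℕ) (cs : List OTree) :
    (node cs).degCount i = (if cs.length = i then 1 else 0) + (cs.map (degCount i)).sum := by
  rw [degCount, List.attach_map_val]

mutual
def degrees : OTree → Multiset ℕ
  | node cs => cs.length ::ₘ forestDegrees cs

def forestDegrees : List OTree → Multiset ℕ
  | [] => 0
  | t :: ts => degrees t + forestDegrees ts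
end

mutual
theorem edges_eq_sum_degrees : ∀ t : OTree, t.edges = t.degrees.sum
  | node cs => by simp [degrees, sum_map_edges_eq_sum_forestDegrees cs]

theorem sum_map_edges_eq_sum_forestDegrees :
    ∀ f : List OTree, (f.map edges).sum = (forestDegrees f).sum
  | [] => rfl
  | t :: ts => by
    simp [forestDegrees, edges_eq_sum_degrees t, sum_map_edges_eq_sum_forestDegrees ts]
end

mutual
theorem degCount_eq_count_degrees (i : ℕ) : ∀ t : OTree, t.degCount i = t.degrees.count i
  | node cs => by
    simp [degrees, Multiset.count_cons, sum_map_degCount_eq_count_forestDegrees i cs, eq_comm,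
      add_comm]

theorem sum_map_degCount_eq_count_forestDegrees (i : ℕ) :
    ∀ f : List OTree, (f.map (degCount i)).sum = (forestDegrees f).count i
  | [] => rfl
  | t :: ts => by
    simp [forestDegrees, degCount_eq_count_degrees i t,
      sum_map_degCount_eq_count_forestDegrees i ts]
end

theorem le_edges_of_mem_degrees {t : OTree} {i : ℕ} (h : i ∈ t.degrees) : i ≤ t.edges :=
  t.edges_eq_sum_degrees ▸ Multiset.le_sum_of_mem h

@[simp] theorem forestDegrees_append (f g : List OTree) :
    forestDegrees (f ++ g) = forestDegrees f + forestDegrees g := by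
  induction f with
  | nil => simp [forestDegrees]
  | cons t ts ih => simp [forestDegrees, ih, add_assoc]

theorem forestDegrees_node_cons (cs rest : List OTree) :
    forestDegrees (node cs :: rest) = cs.length ::ₘ forestDegrees (cs ++ rest) := by
  simp [forestDegrees, degrees, Multiset.cons_add]

def Forest (k : ℕ) (m : Multiset ℕ) : Type :=
  {f : List OTree // f.length = k ∧ forestDegrees f = m}

namespace Forest

def degreesEqEquiv (m : Multiset ℕ) : {t : OTree // t.degrees = m} ≃ Forest 1 m where
  toFun t := ⟨[t.1], rfl, by simp [forestDegrees, t.2]⟩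
  invFun
    | ⟨[t], _, h⟩ => ⟨t, by simpa [forestDegrees] using h⟩
  left_inv _ := rfl
  right_inv
    | ⟨[_], _, _⟩ => rfl

theorem card_zero (m : Multiset ℕ) : Nat.card (Forest 0 m) = if m = 0 then 1 else 0 := by
  split_ifs with hm
  · subst hm
    exact Nat.card_eq_one_iff_exists.mpr
      ⟨⟨[], rfl, rfl⟩, fun f => Subtype.ext (List.length_eq_zero_iff.mp f.2.1)⟩
  · have : IsEmpty (Forest 0 m) :=
      ⟨fun ⟨f, hlen, hdeg⟩ => hm (by rw [← hdeg, List.length_eq_zero_iff.mp hlen]; rfl)⟩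
    exact Nat.card_of_isEmpty

def succEquiv (k : ℕ) (m : Multiset ℕ) :
    Forest (k + 1) m ≃ Σ j : m.toFinset, Forest (k + j) (m.erase j) where
  toFun
    | ⟨node cs :: rest, hlen, hdeg⟩ =>
      have hm : m = cs.length ::ₘ forestDegrees (cs ++ rest) := by
        rw [← hdeg, forestDegrees_node_cons]
      ⟨⟨cs.length, by simp [hm]⟩, cs ++ rest,
        by simp only [List.length_cons, List.length_append] at hlen ⊢; omega, by simp [hm]⟩
  invFun
    | ⟨j, g, hlen, hdeg⟩ => ⟨node (g.take j) :: g.drop j,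
        by simp only [List.length_cons, List.length_drop]; omega, by
        rw [forestDegrees_node_cons, List.length_take_of_le (by omega), List.take_append_drop,
          hdeg, Multiset.cons_erase (Multiset.mem_toFinset.mp j.2)]⟩
  left_inv := by
    rintro ⟨_ | ⟨⟨cs⟩, rest⟩, hlen, hdeg⟩
    · simp at hlen
    · apply Subtype.ext
      simp
  right_inv := by
    rintro ⟨j, g, hlen, hdeg⟩
    apply Sigma.subtype_ext
    · apply Subtype.ext
      simp only [List.length_take, inf_eq_left]
      omega
    · simp

instance (k : ℕ) (m : Multiset ℕ) : Finite (Forest k m) := by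
  induction m using Multiset.strongInductionOn generalizing k with
  | ih m ih =>
  cases k with
  | zero =>
    refine @Finite.of_subsingleton _ ⟨?_⟩
    rintro ⟨f, hf, -⟩ ⟨g, hg, -⟩
    rw [List.length_eq_zero_iff] at hf hg
    exact Subtype.ext (hf.trans hg.symm)
  | succ k =>
    have (j : m.toFinset) : Finite (Forest (k + j) (m.erase j)) :=
      ih _ (Multiset.erase_lt.mpr (Multiset.mem_toFinset.mp j.2)) _
    exact Finite.of_equiv _ (succEquiv k m).symm

theorem card_succ (k : ℕ) (m : Multiset ℕ) :
    Nat.card (Forest (k + 1) m) = ∑ j ∈ m.toFinset, Nat.card (Forest (k + j) (m.erase j)) := by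
  rw [Nat.card_congr (succEquiv k m), Nat.card_sigma]
  exact Finset.sum_coe_sort m.toFinset (fun j => Nat.card (Forest (k + j) (m.erase j)))

open Multiset in
theorem card_mul_natCard_eq (k : ℕ) (m : Multiset ℕ) (hk : card m = m.sum + k) :
    card m * Nat.card (Forest k m) = k * m.countPerms := by
  induction m using Multiset.strongInductionOn generalizing k with
  | ih m ih =>
  cases k with
  | zero =>
    rw [card_zero]
    split_ifs with hm <;> simp [hm]
  | succ k =>
    obtain hm | hm := Nat.lt_or_ge 1 (card m)
    · have hterm (j : ℕ) (hj : j ∈ m.toFinset) :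
          (card m - 1) * (card m * Nat.card (Forest (k + j) (m.erase j))) =
            m.count j * (k + j) * m.countPerms := by
        rw [mem_toFinset] at hj
        have hcard : card (m.erase j) = card m - 1 := card_erase_of_mem hj
        have hsum : j + (m.erase j).sum = m.sum := sum_erase hj
        rw [← hcard, mul_left_comm, ih _ (erase_lt.mpr hj) _ (by omega), mul_left_comm,
          card_mul_countPerms_erase hj]
        ring
      apply Nat.eq_of_mul_eq_mul_left (show 0 < card m - 1 by omega)
      calc (card m - 1) * (card m * Nat.card (Forest (k + 1) m))
          = ∑ j ∈ m.toFinset,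
              (card m - 1) * (card m * Nat.card (Forest (k + j) (m.erase j))) := by
            rw [card_succ, Finset.mul_sum, Finset.mul_sum]
        _ = (k * card m + m.sum) * m.countPerms := by
            rw [Finset.sum_congr rfl hterm, ← Finset.sum_mul, sum_count_mul_add]
        _ = (card m - 1) * ((k + 1) * m.countPerms) := by
            rw [hk, Nat.add_succ_sub_one]
            ring
    · -- `m = {0}` and `k = 0`, where the factor `card m - 1 = 0` cannot be cancelled
      obtain ⟨a, rfl⟩ := card_eq_one.mp (show card m = 1 by omega)
      simp only [card_singleton, sum_singleton] at hk
      obtain ⟨rfl, rfl⟩ : a = 0 ∧ k = 0 := by omega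
      simp [card_succ, card_zero, countPerms_singleton]

end Forest

theorem card_mul_natCard_degrees_eq (m : Multiset ℕ) (hm : Multiset.card m = m.sum + 1) :
    Multiset.card m * Nat.card {t : OTree // t.degrees = m} = m.countPerms := by
  rw [Nat.card_congr (Forest.degreesEqEquiv m), Forest.card_mul_natCard_eq 1 m hm, one_mul]

end OTree

open OTree Multiset in
/-- The number of ordered trees with `n` edges in which exactly `rᵢ` vertices
have `i` children (where `∑ rᵢ = n+1` and `∑ i·rᵢ = n`) is
`(1/(n+1))·multinomial(n+1; r₀, r₁, …, rₙ)`. -/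
theorem card_orderedTrees_outdegreeSequence (n : ℕ) (r : ℕ → ℕ)
    (hv : ∑ i ∈ Finset.range (n + 1), r i = n + 1)
    (he : ∑ i ∈ Finset.range (n + 1), i * r i = n) :
    (Nat.card {t : OTree // t.edges = n ∧ ∀ i ≤ n, t.degCount i = r i} : ℚ) =
      (1 / (n + 1 : ℚ)) * Nat.multinomial (Finset.range (n + 1)) r := by
  set m := ∑ i ∈ Finset.range (n + 1), replicate (r i) i
  have hcount (i : ℕ) : m.count i = if i ≤ n then r i else 0 := by
    simp [m, count_finsetSum_replicate]
  have hcard : card m = n + 1 := by simp [m, hv]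
  have hsum : m.sum = n := by simp [m, sum_finsetSum_replicate, mul_comm, he]
  have hiff (t : OTree) : (t.edges = n ∧ ∀ i ≤ n, t.degCount i = r i) ↔ t.degrees = m := by
    constructor
    · rintro ⟨hn, hr⟩
      ext i
      rw [hcount]
      split_ifs with hi
      · rw [← degCount_eq_count_degrees, hr i hi]
      · exact count_eq_zero.mpr fun hmem => hi (hn ▸ le_edges_of_mem_degrees hmem)
    · intro h
      refine ⟨by rw [edges_eq_sum_degrees, h, hsum], fun i hi => ?_⟩
      rw [degCount_eq_count_degrees, h, hcount, if_pos hi]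
  have htrees := card_mul_natCard_degrees_eq m (by rw [hcard, hsum])
  rw [hcard, countPerms_finsetSum_replicate] at htrees
  rw [Nat.card_congr (Equiv.subtypeEquivRight hiff), ← htrees]
  push_cast
  field_simp
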